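/- arXiv:1606.01776 — 2 statements merged into one kernel-verified Lean document; each statement's English description precedes it below -/
import Mathlib

section
/- Let p be a prime and α, β positive integers. Consider the arrangement B^p_{α,β} consisting of pα lines through a point P1 and pβ other lines through a point P2, with all other intersections double points. Assign to each line L_i the class [F_i] = h − Σ_j (L_i·P_j) e_j in the Z_p-module with basis h, e_1, ..., e_N (N = 2 + p^2αβ the number of points, all blown up). Then every vector (a_1,...,a_{p(α+β)}) in Z_p^{p(α+β)} satisfying Σ_i a_i [F_i] = 0 in Z_p-homology is a scalar multiple of (1,...,1,−1,...,−1) (with 1's on the pα lines through P1 and −1's on the pβ lines through P2). -/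
theorem exists_inl_eq_and_inr_eq_neg_of_add_eq_zero {ι κ G : Type*} [AddGroup G]
    [Nonempty ι] [Nonempty κ] (a : ι ⊕ κ → G)
    (h : ∀ i j, a (Sum.inl i) + a (Sum.inr j) = 0) :
    ∃ c : G, (∀ i, a (Sum.inl i) = c) ∧ ∀ j, a (Sum.inr j) = -c := by
  obtain ⟨i₀⟩ := ‹Nonempty ι›
  obtain ⟨j₀⟩ := ‹Nonempty κ›
  refine ⟨a (Sum.inl i₀), fun i => ?_, fun j => ?_⟩
  · rw [eq_neg_of_add_eq_zero_left (h i j₀), eq_neg_of_add_eq_zero_left (h i₀ j₀)]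
  · rw [eq_neg_of_add_eq_zero_right (h i₀ j)]

theorem Bpab_relations_are_multiples_general
    (p α β : ℕ) (hp : p.Prime) (hα : 0 < α) (hβ : 0 < β)
    (a : Sum (Fin (p * α)) (Fin (p * β)) → ZMod p)
    -- at each double point the two coefficients sum to zero mod p
    (hdbl : ∀ (i : Fin (p * α)) (j : Fin (p * β)),
        a (Sum.inl i) + a (Sum.inr j) = 0) :
    ∃ c : ZMod p, (∀ i : Fin (p * α), a (Sum.inl i) = c) ∧
      (∀ j : Fin (p * β), a (Sum.inr j) = -c) := by
  have : Nonempty (Fin (p * α)) := Fin.pos_iff_nonempty.mp (Nat.mul_pos hp.pos hα)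
  have : Nonempty (Fin (p * β)) := Fin.pos_iff_nonempty.mp (Nat.mul_pos hp.pos hβ)
  exact exists_inl_eq_and_inr_eq_neg_of_add_eq_zero a hdbl

/-- In the arrangement `B^p_{α,β}` (pα lines through `P₁`, pβ lines through `P₂`, all
other intersections double points between one line of each group), every mod-`p`
relation among the proper transforms is a scalar multiple of `(1,…,1,−1,…,−1)`. -/
theorem Bpab_relations_are_multiples
    (p α β : ℕ) (hp : p.Prime) (hα : 0 < α) (hβ : 0 < β)
    (a : Sum (Fin (p * α)) (Fin (p * β)) → ZMod p)
    -- the total sum of the coefficients vanishes mod p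
    (htot : (∑ x, a x) = 0)
    -- the sum of the coefficients of the lines through P₁ vanishes mod p
    (hP1 : (∑ i : Fin (p * α), a (Sum.inl i)) = 0)
    -- the sum of the coefficients of the lines through P₂ vanishes mod p
    (hP2 : (∑ j : Fin (p * β), a (Sum.inr j)) = 0)
    -- at each double point the two coefficients sum to zero mod p
    (hdbl : ∀ (i : Fin (p * α)) (j : Fin (p * β)),
        a (Sum.inl i) + a (Sum.inr j) = 0) :
    ∃ c : ZMod p, (∀ i : Fin (p * α), a (Sum.inl i) = c) ∧
      (∀ j : Fin (p * β), a (Sum.inr j) = -c) :=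
  Bpab_relations_are_multiples_general p α β hp hα hβ a hdbl
end

section
/- Let A be a combinatorial line arrangement with k lines and N multi-points (points on at least 3 lines). Let Q be the (k+N)×(k+N) symmetric block matrix Q = [[B, A'],[A'^T, −I_N]], where A' is the k×N line–multipoint incidence matrix, B has diagonal entries 1 − n_j (n_j the number of multi-points on line L_j) and off-diagonal entries 1 − δ_{i,j} (δ_{i,j} = 1 if L_i ∩ L_j is a multi-point, 0 if a double point). Then with z the all-ones vector, every entry of Qz is positive: the first k entries equal at least 1 and the last N entries equal m_p − 1 ≥ 2, where m_p ≥ 3 is the number of lines through the p-th multi-point. -/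
/-!
Row `j` of `Qz` is the row sum of `B` plus the `n_j` ones of `A'` in that row; they cancel the
`-n_j` in the diagonal entry `1 - n_j`, leaving `1` plus the off-diagonal entries `1 - δ_{j,i} ≥ 0`.
Row `k + p` is the column sum `m_p` of `A'` minus the `1` coming from `-I`.
-/

open Matrix

section BlockRowSums

variable {α l m n o : Type*} [NonAssocSemiring α] [Fintype l] [Fintype m]
  (A : Matrix n l α) (B : Matrix n m α) (C : Matrix o l α) (D : Matrix o m α)

theorem Matrix.fromBlocks_mulVec_const_one_inl (i : n) :
    (fromBlocks A B C D *ᵥ fun _ => 1) (Sum.inl i) = ∑ j, A i j + ∑ j, B i j := by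
  simp [mulVec, dotProduct]

theorem Matrix.fromBlocks_mulVec_const_one_inr (i : o) :
    (fromBlocks A B C D *ᵥ fun _ => 1) (Sum.inr i) = ∑ j, C i j + ∑ j, D i j := by
  simp [mulVec, dotProduct]

end BlockRowSums

theorem Matrix.diag_le_sum_row {ι R : Type*} [Fintype ι] [AddCommMonoid R] [PartialOrder R]
    [IsOrderedAddMonoid R] (B : Matrix ι ι R) (j : ι) (hB : ∀ i, i ≠ j → 0 ≤ B j i) :
    B j j ≤ ∑ i, B j i := by
  classical
  rw [← Finset.add_sum_erase _ _ (Finset.mem_univ j)]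
  exact le_add_of_nonneg_right <| Finset.sum_nonneg fun i hi => hB i (Finset.ne_of_mem_erase hi)

theorem positive_GS_criterion_general
    (k N : ℕ)
    -- incidence matrix between the k lines and the N multi-points (0/1 entries)
    (A' : Matrix (Fin k) (Fin N) ℤ)
    -- δ i j records whether lines i and j meet at a multi-point (0/1 entries)
    (δ : Matrix (Fin k) (Fin k) ℤ)
    (hδ : ∀ i j, δ i j = 0 ∨ δ i j = 1)
    -- every multi-point lies on at least 3 lines
    (hm : ∀ q : Fin N, 3 ≤ ∑ i, A' i q) :
    let B : Matrix (Fin k) (Fin k) ℤ :=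
      fun i j => if i = j then 1 - ∑ q, A' i q else 1 - δ i j
    let Q : Matrix (Sum (Fin k) (Fin N)) (Sum (Fin k) (Fin N)) ℤ :=
      Matrix.fromBlocks B A' A'.transpose (-(1 : Matrix (Fin N) (Fin N) ℤ))
    let z : Sum (Fin k) (Fin N) → ℤ := fun _ => 1
    (∀ x, 0 < Q.mulVec z x) ∧
    (∀ j : Fin k, 1 ≤ Q.mulVec z (Sum.inl j)) ∧
    (∀ q : Fin N, Q.mulVec z (Sum.inr q) = (∑ i, A' i q) - 1 ∧
        2 ≤ Q.mulVec z (Sum.inr q)) := by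
  intro B Q z
  have hline (j : Fin k) : 1 ≤ Q.mulVec z (Sum.inl j) := by
    have hoff : ∀ i, i ≠ j → 0 ≤ B j i := fun i hij => by
      rcases hδ j i with h | h <;> simp [B, hij.symm, h]
    have hdiag : B j j = 1 - ∑ q, A' j q := if_pos rfl
    calc 1 = B j j + ∑ q, A' j q := by rw [hdiag, sub_add_cancel]
      _ ≤ ∑ i, B j i + ∑ q, A' j q := by gcongr; exact B.diag_le_sum_row j hoff
      _ = Q.mulVec z (Sum.inl j) := (fromBlocks_mulVec_const_one_inl ..).symm
  have hpoint (q : Fin N) : Q.mulVec z (Sum.inr q) = (∑ i, A' i q) - 1 := by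
    simp [Q, z, fromBlocks_mulVec_const_one_inr, one_apply, sub_eq_add_neg]
  refine ⟨?_, hline, fun q => ⟨hpoint q, by linarith [hpoint q, hm q]⟩⟩
  rintro (j | q)
  · linarith [hline j]
  · linarith [hpoint q, hm q]

/-- Verification of the positive Gay–Stipsicz criterion for the plumbing of a
combinatorial line arrangement: with `Q = [[B, A'],[A'ᵀ, −I]]` and `z` the all-ones
vector, every entry of `Qz` is positive — the first `k` entries are at least `1` and the
last `N` entries equal `m_p − 1 ≥ 2`. -/
theorem positive_GS_criterion
    (k N : ℕ)
    -- incidence matrix between the k lines and the N multi-points (0/1 entries)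
    (A' : Matrix (Fin k) (Fin N) ℤ)
    (hA' : ∀ i q, A' i q = 0 ∨ A' i q = 1)
    -- δ i j records whether lines i and j meet at a multi-point (0/1 entries)
    (δ : Matrix (Fin k) (Fin k) ℤ)
    (hδ : ∀ i j, δ i j = 0 ∨ δ i j = 1)
    -- every multi-point lies on at least 3 lines
    (hm : ∀ q : Fin N, 3 ≤ ∑ i, A' i q)
    -- a line meets a multi-point iff it passes through it, consistently with δ:
    -- δ i j = 1 exactly when lines i and j share some multi-point
    (hδA : ∀ i j, i ≠ j → (δ i j = 1 ↔ ∃ q, A' i q = 1 ∧ A' j q = 1)) :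
    let B : Matrix (Fin k) (Fin k) ℤ :=
      fun i j => if i = j then 1 - ∑ q, A' i q else 1 - δ i j
    let Q : Matrix (Sum (Fin k) (Fin N)) (Sum (Fin k) (Fin N)) ℤ :=
      Matrix.fromBlocks B A' A'.transpose (-(1 : Matrix (Fin N) (Fin N) ℤ))
    let z : Sum (Fin k) (Fin N) → ℤ := fun _ => 1
    (∀ x, 0 < Q.mulVec z x) ∧
    (∀ j : Fin k, 1 ≤ Q.mulVec z (Sum.inl j)) ∧
    (∀ q : Fin N, Q.mulVec z (Sum.inr q) = (∑ i, A' i q) - 1 ∧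
        2 ≤ Q.mulVec z (Sum.inr q)) :=
  positive_GS_criterion_general k N A' δ hδ hm
end
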